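/- In the Farey graph, if two distinct vertices a/b and c/d satisfy |ad - bc| ≤ 2, then their graph distance is at most 2. -/

import Mathlib

/-- Vertices of the Farey graph: reduced fractions `a/b` with `b ≥ 0`
(including `∞ = 1/0`). -/
def FareyVertex : Type := {p : ℤ × ℤ // 0 ≤ p.2 ∧ Int.gcd p.1 p.2 = 1}

/-- The Farey graph: `a/b` and `c/d` are adjacent iff `|ad - bc| = 1`. -/
def FareyGraph : SimpleGraph FareyVertex where
  Adj x y := |x.1.1 * y.1.2 - x.1.2 * y.1.1| = 1
  symm := by
    constructor
    intro x y h
    rw [show y.1.1 * x.1.2 - y.1.2 * x.1.1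
        = -(x.1.1 * y.1.2 - x.1.2 * y.1.1) by ring, abs_neg]
    exact h
  loopless := by
    constructor
    intro x h
    simp only [show x.1.1 * x.1.2 - x.1.2 * x.1.1 = 0 by ring, abs_zero] at h
    exact zero_ne_one h

/-! If `|ad - bc| = 1` the vertices are adjacent. If `|ad - bc| = 2`, then reducing mod 2 gives
`a ≡ c` and `b ≡ d`, since two nonzero vectors of `𝔽₂²` with zero determinant coincide; so the
halved mediant `((a + c)/2) / ((b + d)/2)` is a vertex whose determinants with `a/b` and `c/d`
are both `±1`. If `ad - bc = 0`, the two distinct vertices are `1/0` and `-1/0`, both adjacent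
to `0/1`. -/

lemma ZMod.two_add_eq_zero_of_det_eq_zero {A B C D U V W X : ZMod 2}
    (hAB : U * A + V * B = 1) (hCD : W * C + X * D = 1) (hdet : A * D - B * C = 0) :
    A + C = 0 ∧ B + D = 0 := by
  revert A B C D U V W X
  decide

lemma Int.two_dvd_add_of_two_dvd_det {a b c d : ℤ} (hab : IsCoprime a b) (hcd : IsCoprime c d)
    (hdet : 2 ∣ a * d - b * c) : 2 ∣ a + c ∧ 2 ∣ b + d := by
  have two_dvd_iff (n : ℤ) : 2 ∣ n ↔ (n : ZMod 2) = 0 :=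
    (ZMod.intCast_zmod_eq_zero_iff_dvd n 2).symm
  obtain ⟨u, v, huv⟩ := hab.map (Int.castRingHom (ZMod 2))
  obtain ⟨w, x, hwx⟩ := hcd.map (Int.castRingHom (ZMod 2))
  simp only [two_dvd_iff, Int.cast_add, Int.cast_sub, Int.cast_mul] at hdet ⊢
  exact ZMod.two_add_eq_zero_of_det_eq_zero huv hwx hdet

lemma Int.isCoprime_of_abs_det_eq_one {a b c d : ℤ} (h : |a * d - b * c| = 1) :
    IsCoprime c d := by
  rcases abs_eq zero_le_one |>.mp h with h | h
  · exact ⟨-b, a, by linarith⟩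
  · exact ⟨b, -a, by linarith⟩

lemma SimpleGraph.dist_le_two_of_adj_of_adj {V : Type*} {G : SimpleGraph V} {u w v : V}
    (huw : G.Adj u w) (hwv : G.Adj w v) : G.dist u v ≤ 2 :=
  G.dist_le (.cons huw (.cons hwv .nil))

namespace FareyVertex

def det (x y : FareyVertex) : ℤ := x.1.1 * y.1.2 - x.1.2 * y.1.1

lemma fareyGraph_adj_iff {x y : FareyVertex} : FareyGraph.Adj x y ↔ |det x y| = 1 := Iff.rfl

lemma det_swap (x y : FareyVertex) : det y x = -det x y := by
  unfold det; ring

lemma isCoprime (x : FareyVertex) : IsCoprime x.1.1 x.1.2 :=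
  Int.isCoprime_iff_gcd_eq_one.mpr x.2.2

def zero : FareyVertex := ⟨(0, 1), zero_le_one, by decide⟩

/-- `1/0` and `-1/0` are distinct vertices, so `det x y = 0` does not force `x = y`. -/
lemma den_eq_zero_of_det_eq_zero {x y : FareyVertex} (hxy : x ≠ y) (h : det x y = 0) :
    x.1.2 = 0 := by
  unfold det at h
  have hxd : x.1.2 ∣ y.1.2 := x.isCoprime.symm.dvd_of_dvd_mul_left ⟨y.1.1, by linarith⟩
  have hyd : y.1.2 ∣ x.1.2 := y.isCoprime.symm.dvd_of_dvd_mul_left ⟨x.1.1, by linarith⟩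
  have hden : x.1.2 = y.1.2 := Int.dvd_antisymm x.2.1 y.2.1 hxd hyd
  by_contra hx
  have hnum : x.1.1 = y.1.1 := mul_left_cancel₀ hx (by rw [hden] at h ⊢; linarith)
  exact hxy (Subtype.ext (Prod.ext hnum hden))

lemma adj_zero_of_den_eq_zero {x : FareyVertex} (hx : x.1.2 = 0) : FareyGraph.Adj x zero := by
  have hgcd := x.2.2
  rw [hx, Int.gcd_zero_right] at hgcd
  show |x.1.1 * 1 - x.1.2 * 0| = 1
  rw [mul_one, mul_zero, sub_zero, Int.abs_eq_natAbs, hgcd, Nat.cast_one]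

lemma exists_adj_adj_of_abs_det_eq_two {x y : FareyVertex} (h : |det x y| = 2) :
    ∃ m, FareyGraph.Adj x m ∧ FareyGraph.Adj m y := by
  obtain ⟨⟨p, hp⟩, ⟨q, hq⟩⟩ := Int.two_dvd_add_of_two_dvd_det x.isCoprime y.isCoprime
    (show 2 ∣ det x y from (dvd_abs _ _).mp (by rw [h]))
  -- `(p, q)` is the halved mediant of `x` and `y`
  have abs_half {t : ℤ} (ht : 2 * t = det x y) : |t| = 1 := by
    rw [← ht, abs_mul, abs_two] at h; linarith
  have hxm : |x.1.1 * q - x.1.2 * p| = 1 :=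
    abs_half (by unfold det; linear_combination x.1.2 * hp - x.1.1 * hq)
  have hmy : |p * y.1.2 - q * y.1.1| = 1 :=
    abs_half (by unfold det; linear_combination y.1.1 * hq - y.1.2 * hp)
  exact ⟨⟨(p, q), by linarith [x.2.1, y.2.1],
    Int.isCoprime_iff_gcd_eq_one.mp (Int.isCoprime_of_abs_det_eq_one hxm)⟩, hxm, hmy⟩

end FareyVertex

open FareyVertex

/-- In the Farey graph, if two distinct vertices `a/b` and `c/d` satisfy
`|ad - bc| ≤ 2`, then their graph distance is at most `2`. -/
theorem stmt_11 (x y : FareyVertex) (hxy : x ≠ y)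
    (h : |x.1.1 * y.1.2 - x.1.2 * y.1.1| ≤ 2) :
    FareyGraph.dist x y ≤ 2 := by
  change |det x y| ≤ 2 at h
  obtain h0 | h1 | h2 : |det x y| = 0 ∨ |det x y| = 1 ∨ |det x y| = 2 := by
    have := abs_nonneg (det x y); omega
  · rw [abs_eq_zero] at h0
    have hx := den_eq_zero_of_det_eq_zero hxy h0
    have hy := den_eq_zero_of_det_eq_zero hxy.symm (by rw [det_swap, h0, neg_zero])
    exact SimpleGraph.dist_le_two_of_adj_of_adj (adj_zero_of_den_eq_zero hx)
      (adj_zero_of_den_eq_zero hy).symm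
  · exact (SimpleGraph.dist_eq_one_iff_adj.mpr (fareyGraph_adj_iff.mpr h1)).trans_le
      one_le_two
  · obtain ⟨m, hxm, hmy⟩ := exists_adj_adj_of_abs_det_eq_two h2
    exact SimpleGraph.dist_le_two_of_adj_of_adj hxm hmy
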